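/- Let p, m be positive integers and for 0 ≤ k ≤ p define r(k) = (p!/(k!(p-k)!)) · k^k · (m+p-k)^{m+p-k} (with 0^0=1). Then for every integer k with 0 ≤ k < p-1, r(k+1)/r(k) ≤ exp(1/(2(m+p-k))). -/

import Mathlib

/-!
In fact `r (k + 1) ≤ r k`. Put `N = m + p - k`. Since `C(p, k+1) (k+1) = C(p, k) (p - k)` and
`p - k ≤ N - 1` (as `m ≥ 1`), it suffices that `(k+1)^k (N-1)^N ≤ k^k N^N`, which is the product
of `(1 + 1/k)^k ≤ e` and `(1 - 1/N)^N ≤ e⁻¹`.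
-/

/-- `r k = (p choose k) * k^k * (m+p-k)^(m+p-k)` as a real number (with `0^0 = 1`). -/
noncomputable def rSeq (p m k : ℕ) : ℝ :=
  (Nat.choose p k : ℝ) * (k : ℝ) ^ k * ((m + p - k : ℕ) : ℝ) ^ (m + p - k)

open Real

lemma add_one_pow_le_exp_one_mul_pow (k : ℕ) : ((k : ℝ) + 1) ^ k ≤ exp 1 * (k : ℝ) ^ k := by
  rcases Nat.eq_zero_or_pos k with rfl | hk
  · simp [one_le_exp zero_le_one]
  have hk' : (k : ℝ) ≠ 0 := by positivity
  calc ((k : ℝ) + 1) ^ k = (1 + (k : ℝ)⁻¹) ^ k * (k : ℝ) ^ k := by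
        rw [← mul_pow]; congr 1; field_simp
    _ ≤ exp 1 * (k : ℝ) ^ k := by gcongr; exact one_add_inv_pow_le_exp

lemma pow_succ_le_exp_neg_one_mul (n : ℕ) :
    (n : ℝ) ^ (n + 1) ≤ exp (-1) * ((n : ℝ) + 1) ^ (n + 1) := by
  have h := one_sub_div_pow_le_exp_neg (n := n + 1) (t := 1) (by simp)
  push_cast at h
  calc (n : ℝ) ^ (n + 1) = (1 - 1 / ((n : ℝ) + 1)) ^ (n + 1) * ((n : ℝ) + 1) ^ (n + 1) := by
        rw [← mul_pow]; congr 1; field_simp; ring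
    _ ≤ exp (-1) * ((n : ℝ) + 1) ^ (n + 1) := by gcongr

lemma add_one_pow_mul_pow_succ_le (k n : ℕ) :
    ((k : ℝ) + 1) ^ k * (n : ℝ) ^ (n + 1) ≤ (k : ℝ) ^ k * ((n : ℝ) + 1) ^ (n + 1) :=
  calc ((k : ℝ) + 1) ^ k * (n : ℝ) ^ (n + 1)
      ≤ (exp 1 * (k : ℝ) ^ k) * (exp (-1) * ((n : ℝ) + 1) ^ (n + 1)) := by
        gcongr
        exacts [add_one_pow_le_exp_one_mul_pow k, pow_succ_le_exp_neg_one_mul n]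
    _ = (k : ℝ) ^ k * ((n : ℝ) + 1) ^ (n + 1) := by
        rw [mul_mul_mul_comm, ← exp_add]; simp

lemma rSeq_pos {p k : ℕ} (m : ℕ) (hk : k ≤ p) : 0 < rSeq p m k := by
  unfold rSeq
  have hchoose : 0 < Nat.choose p k := Nat.choose_pos hk
  exact_mod_cast Nat.mul_pos (Nat.mul_pos hchoose Nat.pow_self_pos) Nat.pow_self_pos

lemma rSeq_succ_le {p m k : ℕ} (hm : 0 < m) (hk : k < p) : rSeq p m (k + 1) ≤ rSeq p m k := by
  obtain ⟨n, hn⟩ : ∃ n, m + p - (k + 1) = n := ⟨_, rfl⟩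
  have hn' : m + p - k = n + 1 := by omega
  have hpk : ((p - k : ℕ) : ℝ) ≤ n := by exact_mod_cast (by omega : p - k ≤ n)
  have hchoose : (Nat.choose p (k + 1) : ℝ) * ((k : ℝ) + 1) = Nat.choose p k * (p - k : ℕ) := by
    exact_mod_cast Nat.choose_succ_right_eq p k
  unfold rSeq
  rw [hn, hn']
  push_cast
  calc (Nat.choose p (k + 1) : ℝ) * ((k : ℝ) + 1) ^ (k + 1) * (n : ℝ) ^ n
      = Nat.choose p k * (p - k : ℕ) * (((k : ℝ) + 1) ^ k * (n : ℝ) ^ n) := by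
        rw [pow_succ, ← hchoose]; ring
    _ ≤ Nat.choose p k * n * (((k : ℝ) + 1) ^ k * (n : ℝ) ^ n) := by gcongr
    _ = Nat.choose p k * (((k : ℝ) + 1) ^ k * (n : ℝ) ^ (n + 1)) := by ring
    _ ≤ Nat.choose p k * ((k : ℝ) ^ k * ((n : ℝ) + 1) ^ (n + 1)) :=
        mul_le_mul_of_nonneg_left (add_one_pow_mul_pow_succ_le k n) (by positivity)
    _ = Nat.choose p k * (k : ℝ) ^ k * ((n : ℝ) + 1) ^ (n + 1) := by ring

theorem stmt_3_general (p m : ℕ) (hm : 0 < m) (k : ℕ) (hk : k < p - 1) :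
    rSeq p m (k + 1) / rSeq p m k ≤ Real.exp (1 / (2 * ((m : ℝ) + p - k))) := by
  have hkp : k < p := by omega
  have hkp' : (k : ℝ) < p := by exact_mod_cast hkp
  calc rSeq p m (k + 1) / rSeq p m k ≤ 1 :=
        (div_le_one (rSeq_pos m hkp.le)).2 (rSeq_succ_le hm hkp)
    _ ≤ exp (1 / (2 * ((m : ℝ) + p - k))) := by
        apply one_le_exp
        have : (0 : ℝ) ≤ m := m.cast_nonneg
        exact div_nonneg zero_le_one (by linarith)

/-- For positive integers `p, m` and `0 ≤ k < p - 1`,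
`r(k+1)/r(k) ≤ exp(1/(2(m+p-k)))`. -/
theorem stmt_3 (p m : ℕ) (hp : 0 < p) (hm : 0 < m) (k : ℕ) (hk : k < p - 1) :
    rSeq p m (k + 1) / rSeq p m k ≤ Real.exp (1 / (2 * ((m : ℝ) + p - k))) :=
  stmt_3_general p m hm k hk
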